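/- Let m, n, h ∈ ℕ with h ≤ min(m,n). If either (n ≥ 2h and m > 2h) or (n ≤ 2h and m > n), then the EPOSIC channel Φ_{m,n,h} is not entanglement breaking, i.e. its Choi matrix is not separable. In particular, Φ_{m,n,h} is not entanglement breaking whenever m > n; specifically, Φ_{m,h,h} is not entanglement breaking for any 0 ≤ h < m. -/

import Mathlib

open scoped BigOperators Matrix ComplexOrder Kronecker
open Matrix

/-- Binomial coefficient `C(a, b)` with an integer lower argument (zero if `b < 0`),
as a real number. -/
noncomputable def Cb (a : ℕ) (b : ℤ) : ℝ :=
  if 0 ≤ b then (a.choose b.toNat : ℝ) else 0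

/-- The coefficient `β_{i,s,j}` of the EPOSIC channel `Φ_{m,n,h}`. -/
noncomputable def epsBeta (m n h : ℕ) (i s j : ℤ) : ℝ :=
  ((-1 : ℝ) ^ s * Cb h s * Cb (n - h) (j - s) * Cb (m - h) (i - j + s)) /
    Real.sqrt (Cb (m + n - 2 * h) i * Cb m (i - j + h) * Cb n j *
      ∑ k ∈ Finset.range (h + 1),
        (h.choose k : ℝ) ^ 2 / ((m.choose (h - k) : ℝ) * (n.choose k : ℝ)))

/-- The coefficient `ε_i^j = ε_i^j(m,n,h)` of the EPOSIC channel `Φ_{m,n,h}`. -/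
noncomputable def eps (m n h : ℕ) (i j : ℤ) : ℝ :=
  ∑ s ∈ Finset.Icc (max 0 (max (j - i) (j + h - n)))
      (min (h : ℤ) (min j (j + m - i - h))),
    epsBeta m n h i s j

/-- The `j`-th EPOSIC Kraus operator of `Φ_{m,n,h}`: the `(m+1) × (r+1)` matrix
(`r = m + n - 2h`) whose `(i - j + h, i)` entry is `ε_i^j` for
`max{0, j-h} ≤ i ≤ min{r, m-h+j}`, all other entries being `0`. -/
noncomputable def kraus (m n h j : ℕ) : Matrix (Fin (m + 1)) (Fin (m + n - 2 * h + 1)) ℂ :=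
  Matrix.of fun l i =>
    if (l : ℤ) = (i : ℤ) - j + h ∧ max 0 ((j : ℤ) - h) ≤ (i : ℤ) ∧
        (i : ℤ) ≤ min ((m : ℤ) + n - 2 * h) ((m : ℤ) - h + j)
      then ((eps m n h i j : ℝ) : ℂ) else 0

/-- The EPOSIC channel `Φ_{m,n,h}`. -/
noncomputable def eposic (m n h : ℕ)
    (A : Matrix (Fin (m + n - 2 * h + 1)) (Fin (m + n - 2 * h + 1)) ℂ) :
    Matrix (Fin (m + 1)) (Fin (m + 1)) ℂ :=
  ∑ j ∈ Finset.range (n + 1), kraus m n h j * A * (kraus m n h j)ᴴ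

/-- A positive semidefinite matrix indexed by a product system is separable if it is a
finite sum of Kronecker products of positive semidefinite matrices of the two factors. -/
def Separable {d₁ d₂ : ℕ} (ρ : Matrix (Fin d₁ × Fin d₂) (Fin d₁ × Fin d₂) ℂ) : Prop :=
  ∃ (t : ℕ) (σ : Fin t → Matrix (Fin d₁) (Fin d₁) ℂ)
    (τ : Fin t → Matrix (Fin d₂) (Fin d₂) ℂ),
    (∀ s, (σ s).PosSemidef) ∧ (∀ s, (τ s).PosSemidef) ∧ ρ = ∑ s, σ s ⊗ₖ τ s

/-- The Choi matrix `C(Φ) = ∑_{i,j} Φ(E_{ij}) ⊗ E_{ij}` of a linear map between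
matrix spaces, where `E_{ij}` are the standard matrix units. -/
noncomputable def choi {d e : ℕ}
    (Φ : Matrix (Fin d) (Fin d) ℂ → Matrix (Fin e) (Fin e) ℂ) :
    Matrix (Fin e × Fin d) (Fin e × Fin d) ℂ :=
  ∑ i : Fin d, ∑ j : Fin d, Φ (Matrix.single i j 1) ⊗ₖ Matrix.single i j 1

/-!
If `ρ = ∑ σₜ ⊗ τₜ` is separable and `ρ_{(a,d),(a,d)} = ∑ σₜ(a,a) τₜ(d,d) = 0`, then in every
term row `a` of `σₜ` or row `d` of `τₜ` vanishes, so `ρ_{(a,b),(c,d)} = 0` for all `b, c`.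
For the Choi matrix of `Φ_{m,n,h}` take `a = 0`, `d = r`, `b = n - h`, `c = m - h`. Since `T_j` is
supported on the entries `(i - j + h, i)` and `r + h - j ≥ m - h > 0`, the diagonal entry at
`(0, r)` is `∑ⱼ |T_j(0, r)|² = 0`. Only `T_n` contributes to the entry at `((0, n-h), (m-h, r))`,
which is `ε_{n-h}^n ε_r^n`; for `j = n` the sum defining `ε_i^n` is the single nonzero term
`β_{i,h,n}`.
-/
lemma Matrix.PosSemidef.apply_eq_zero_of_diag_eq_zero {𝕜 ι : Type*} [RCLike 𝕜] [Fintype ι]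
    {A : Matrix ι ι 𝕜} (hA : A.PosSemidef) {i : ι} (hi : A i i = 0) (j : ι) : A i j = 0 := by
  classical
  have hdet := (hA.submatrix ![i, j]).det_nonneg
  simp only [det_fin_two, submatrix_apply, cons_val_zero, cons_val_one, hi, zero_mul, zero_sub,
    ← hA.1.apply i j, RCLike.star_def, RCLike.conj_mul, neg_nonneg] at hdet
  have hji : A j i = 0 := by
    simpa using le_antisymm (by exact_mod_cast hdet : ‖A j i‖ ^ 2 ≤ 0) (by positivity)
  rw [← hA.1.apply i j, hji, star_zero]

lemma Matrix.mul_single_mul_conjTranspose_apply {α m n : Type*} [Fintype n] [DecidableEq n]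
    [Semiring α] [StarRing α] (K : Matrix m n α) (b d : n) (p q : m) :
    (K * single b d (1 : α) * Kᴴ) p q = K p b * star (K q d) := by
  simp [mul_apply, single, ite_and]

lemma Separable.apply_eq_zero_of_diag_eq_zero {d₁ d₂ : ℕ}
    {ρ : Matrix (Fin d₁ × Fin d₂) (Fin d₁ × Fin d₂) ℂ} (hρ : Separable ρ) {a : Fin d₁}
    {d : Fin d₂} (h0 : ρ (a, d) (a, d) = 0) (c : Fin d₁) (b : Fin d₂) :
    ρ (a, b) (c, d) = 0 := by
  obtain ⟨t, σ, τ, hσ, hτ, rfl⟩ := hρ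
  simp only [Matrix.sum_apply, kroneckerMap_apply] at h0 ⊢
  have hterm := (Finset.sum_eq_zero_iff_of_nonneg fun s _ =>
    mul_nonneg (hσ s).diag_nonneg (hτ s).diag_nonneg).mp h0
  refine Finset.sum_eq_zero fun s hs => ?_
  rcases mul_eq_zero.mp (hterm s hs) with hσa | hτd
  · rw [(hσ s).apply_eq_zero_of_diag_eq_zero hσa c, zero_mul]
  · rw [← (hτ s).1.apply, (hτ s).apply_eq_zero_of_diag_eq_zero hτd b, star_zero, mul_zero]

lemma choi_apply {d e : ℕ} (Φ : Matrix (Fin d) (Fin d) ℂ → Matrix (Fin e) (Fin e) ℂ)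
    (p q : Fin e) (b c : Fin d) :
    choi Φ (p, b) (q, c) = Φ (single b c 1) p q := by
  simp [choi, Matrix.sum_apply, kroneckerMap_apply, single, ite_and]

lemma Cb_pos {a : ℕ} {b : ℤ} (hb₀ : 0 ≤ b) (hba : b ≤ a) : 0 < Cb a b := by
  rw [Cb, if_pos hb₀]
  exact_mod_cast Nat.choose_pos (by omega)

lemma sum_choose_sq_div_choose_mul_choose_pos {m h : ℕ} (n : ℕ) (hm : h ≤ m) :
    0 < ∑ k ∈ Finset.range (h + 1),
      (h.choose k : ℝ) ^ 2 / ((m.choose (h - k) : ℝ) * (n.choose k : ℝ)) := by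
  refine Finset.sum_pos' (fun k _ => by positivity) ⟨0, by simp, ?_⟩
  have : 0 < (m.choose h : ℝ) := by exact_mod_cast Nat.choose_pos hm
  simpa using this

section Eposic

variable {m n h : ℕ}

lemma epsBeta_ne_zero (hn : h ≤ n) (hm : h ≤ m) {i : ℤ} (hi₀ : n ≤ i + h)
    (hi : i ≤ m + n - 2 * h) : epsBeta m n h i h n ≠ 0 := by
  have hS := sum_choose_sq_div_choose_mul_choose_pos n hm
  have hCr := Cb_pos (a := m + n - 2 * h) (b := i) (by omega) (by omega)
  have hCm := Cb_pos (a := m) (b := i - n + h) (by omega) (by omega)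
  have hCn := Cb_pos (a := n) (b := n) (by omega) le_rfl
  rw [epsBeta]
  refine div_ne_zero (mul_ne_zero (mul_ne_zero (mul_ne_zero (by simp) ?_) ?_) ?_)
    (Real.sqrt_pos.mpr (by positivity)).ne'
  all_goals exact (Cb_pos (by omega) (by omega)).ne'

lemma eps_last (hn : h ≤ n) {i : ℤ} (hi₀ : n ≤ i + h) (hi : i ≤ m + n - 2 * h) :
    eps m n h i n = epsBeta m n h i h n := by
  have hlo : max (0 : ℤ) (max (n - i) (n + h - n)) = h := by omega
  have hhi : min (h : ℤ) (min n (n + m - i - h)) = h := by omega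
  rw [eps, hlo, hhi, Finset.Icc_self, Finset.sum_singleton]

lemma kraus_apply_of_ne {j : ℕ} {l : Fin (m + 1)} {i : Fin (m + n - 2 * h + 1)}
    (hl : (l : ℤ) ≠ i - j + h) : kraus m n h j l i = 0 := by
  rw [kraus, of_apply, if_neg fun hc => hl hc.1]

lemma kraus_last_apply_ne_zero (hn : h ≤ n) (hm : h ≤ m) {l : Fin (m + 1)}
    {i : Fin (m + n - 2 * h + 1)} (hl : (l : ℤ) = i - n + h) (hi : n ≤ i + h) :
    kraus m n h n l i ≠ 0 := by
  have hi_le := i.is_lt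
  rw [kraus, of_apply, if_pos (by omega), Complex.ofReal_ne_zero,
    eps_last hn (by omega) (by omega)]
  exact epsBeta_ne_zero hn hm (by omega) (by omega)

lemma choi_eposic_apply (p q : Fin (m + 1)) (b c : Fin (m + n - 2 * h + 1)) :
    choi (eposic m n h) (p, b) (q, c) =
      ∑ j ∈ Finset.range (n + 1), kraus m n h j p b * star (kraus m n h j q c) := by
  simp only [choi_apply, eposic, Matrix.sum_apply, mul_single_mul_conjTranspose_apply]

theorem not_separable_choi_eposic (hn : h ≤ n) (hm : h < m) :
    ¬ Separable (choi (eposic m n h)) := by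
  intro hsep
  let a : Fin (m + 1) := ⟨0, by omega⟩
  let c : Fin (m + 1) := ⟨m - h, by omega⟩
  let b : Fin (m + n - 2 * h + 1) := ⟨n - h, by omega⟩
  let d : Fin (m + n - 2 * h + 1) := ⟨m + n - 2 * h, by omega⟩
  have hdiag : choi (eposic m n h) (a, d) (a, d) = 0 := by
    rw [choi_eposic_apply]
    refine Finset.sum_eq_zero fun j hj => ?_
    have := Finset.mem_range.mp hj
    rw [kraus_apply_of_ne (by simp only [a, d]; omega), zero_mul]
  have hoff : choi (eposic m n h) (a, b) (c, d) ≠ 0 := by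
    rw [choi_eposic_apply, Finset.sum_eq_single_of_mem n (by simp)]
    · exact mul_ne_zero (kraus_last_apply_ne_zero hn hm.le (by simp only [a, b]; omega)
        (by simp only [b]; omega)) (star_ne_zero.mpr (kraus_last_apply_ne_zero hn hm.le
        (by simp only [c, d]; omega) (by simp only [d]; omega)))
    · intro j _ hj
      rw [kraus_apply_of_ne (by simp only [a, b]; omega), zero_mul]
  exact hoff (hsep.apply_eq_zero_of_diag_eq_zero hdiag c b)

end Eposic

theorem stmt19 (m n h : ℕ) (hh : h ≤ min m n) :
    ((2 * h ≤ n ∧ 2 * h < m) ∨ (n ≤ 2 * h ∧ n < m) → ¬ Separable (choi (eposic m n h))) ∧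
    (n < m → ¬ Separable (choi (eposic m n h))) := by
  have hn : h ≤ n := hh.trans (min_le_right m n)
  exact ⟨fun hmn => not_separable_choi_eposic hn (by omega),
    fun hmn => not_separable_choi_eposic hn (by omega)⟩
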